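/- The function ψ(p) := φ(Φ⁻¹(p))/p is strictly decreasing on the interval (0, 0.1). Moreover, there exist absolute constants c, C > 0 such that for all 0 < p₁ < p₂ < 0.1, c · (√(ln(1/p₁)) − √(ln(1/p₂))) ≤ ψ(p₁) − ψ(p₂) ≤ C · (√(ln(1/p₁)) − √(ln(1/p₂))). -/

import Mathlib

open Real

/-- Standard Gaussian density. -/
noncomputable def gphi (x : ℝ) : ℝ := (Real.sqrt (2 * Real.pi))⁻¹ * Real.exp (-(x ^ 2) / 2)

/-- Standard Gaussian CDF. -/
noncomputable def Phi (r : ℝ) : ℝ := ∫ x in Set.Iic r, gphi x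

/-- Inverse of the standard Gaussian CDF (on (0,1)). -/
noncomputable def PhiInv : ℝ → ℝ := Function.invFun Phi

/-- `ψ(p) := φ(Φ⁻¹(p)) / p`. -/
noncomputable def psiFun (p : ℝ) : ℝ := gphi (PhiInv p) / p

open MeasureTheory Filter Set Topology

lemma sqrt2pi_pos : 0 < Real.sqrt (2 * Real.pi) := Real.sqrt_pos.2 (by positivity)

lemma gphi_pos (x : ℝ) : 0 < gphi x := by unfold gphi; positivity

lemma gphi_cont : Continuous gphi := by unfold gphi; continuity

lemma gphi_integrable : Integrable gphi := by
  have h : Integrable (fun x : ℝ => Real.exp (-(1/2 : ℝ) * x ^ 2)) :=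
    integrable_exp_neg_mul_sq (by norm_num)
  have h2 := h.const_mul (Real.sqrt (2 * Real.pi))⁻¹
  refine h2.congr (Filter.Eventually.of_forall fun x => ?_)
  unfold gphi; ring_nf

lemma gphi_deriv (x : ℝ) : HasDerivAt gphi (-x * gphi x) x := by
  have h1 : HasDerivAt (fun y : ℝ => -(y ^ 2) / 2) (-x) x := by
    have h := ((hasDerivAt_pow 2 x).neg.div_const 2)
    refine h.congr_deriv ?_
    simp; ring
  have h2 := (h1.exp).const_mul (Real.sqrt (2 * Real.pi))⁻¹
  refine h2.congr_deriv ?_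
  unfold gphi; ring

lemma sq_tendsto : Tendsto (fun x : ℝ => x ^ 2) atBot atTop := by
  have h : Tendsto (fun x : ℝ => |x| ^ 2) atBot atTop :=
    (tendsto_pow_atTop (two_ne_zero)).comp tendsto_abs_atBot_atTop
  refine h.congr fun x => by rw [sq_abs]

lemma gphi_tendsto_bot : Tendsto gphi atBot (𝓝 0) := by
  have h : Tendsto (fun x : ℝ => -(x ^ 2) / 2) atBot atBot := by
    have h2 := tendsto_neg_atTop_atBot.comp (sq_tendsto.atTop_div_const (by norm_num : (0:ℝ) < 2))
    refine h2.congr fun x => by simp [Function.comp]; ring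
  have h3 := (Real.tendsto_exp_atBot.comp h).const_mul (Real.sqrt (2 * Real.pi))⁻¹
  rw [mul_zero] at h3
  exact h3.congr fun x => rfl

lemma Phi_hasDeriv (x : ℝ) : HasDerivAt Phi (gphi x) x := by
  have h : HasDerivAt (fun u => ∫ t in (0:ℝ)..u, gphi t) (gphi x) x :=
    intervalIntegral.integral_hasDerivAt_right (gphi_integrable.intervalIntegrable)
      (gphi_cont.stronglyMeasurableAtFilter _ _) gphi_cont.continuousAt
  have h2 := h.const_add (Phi 0)
  have hfun : Phi = fun u => Phi 0 + ∫ t in (0:ℝ)..u, gphi t := by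
    funext u
    have := intervalIntegral.integral_Iic_sub_Iic (f := gphi) (μ := volume) (a := (0:ℝ)) (b := u)
      gphi_integrable.integrableOn gphi_integrable.integrableOn
    unfold Phi; unfold Phi at this; linarith
  rw [hfun]; exact h2

lemma Phi_strictMono : StrictMono Phi :=
  strictMono_of_hasDerivAt_pos Phi_hasDeriv gphi_pos

lemma Phi_tendsto_bot : Tendsto Phi atBot (𝓝 0) := by
  have h := MeasureTheory.intervalIntegral_tendsto_integral_Iic (0:ℝ) (f := gphi) (μ := volume)
    gphi_integrable.integrableOn tendsto_id
  have h2 : Tendsto (fun a : ℝ => Phi 0 - ∫ t in a..(0:ℝ), gphi t) atBot (𝓝 (Phi 0 - Phi 0)) :=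
    tendsto_const_nhds.sub h
  rw [sub_self] at h2
  refine h2.congr fun a => ?_
  have := intervalIntegral.integral_Iic_sub_Iic (f := gphi) (μ := volume) (a := a) (b := (0:ℝ))
    gphi_integrable.integrableOn gphi_integrable.integrableOn
  unfold Phi; unfold Phi at this; linarith

lemma nonneg_of_deriv_bot {b : ℝ} {f f' : ℝ → ℝ}
    (hd : ∀ x ∈ Iio b, HasDerivAt f (f' x) x)
    (h0 : ∀ x ∈ Iio b, 0 ≤ f' x)
    (hlim : Tendsto f atBot (𝓝 0)) : ∀ x ∈ Iio b, 0 ≤ f x := by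
  have hmono : MonotoneOn f (Iio b) := by
    refine monotoneOn_of_deriv_nonneg (convex_Iio b) ?_ ?_ ?_
    · exact fun x hx => (hd x hx).continuousAt.continuousWithinAt
    · rw [interior_Iio]
      exact fun x hx => (hd x hx).differentiableAt.differentiableWithinAt
    · rw [interior_Iio]
      intro x hx
      rw [(hd x hx).deriv]; exact h0 x hx
  intro x hx
  refine le_of_tendsto hlim ?_
  filter_upwards [eventually_le_atBot x] with y hy
  exact hmono (lt_of_le_of_lt hy hx : y ∈ Iio b) hx hy

lemma mills_upper : ∀ x ∈ Iio (0:ℝ), Phi x ≤ gphi x / (-x) := by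
  have key : ∀ x ∈ Iio (0:ℝ), 0 ≤ -(gphi x / x) - Phi x := by
    refine nonneg_of_deriv_bot (f' := fun x => gphi x / x ^ 2) ?_ ?_ ?_
    · intro x hx
      have hx0 : (x : ℝ) ≠ 0 := ne_of_lt hx
      have hdiv := ((gphi_deriv x).div (hasDerivAt_id x) hx0).neg.sub (Phi_hasDeriv x)
      refine hdiv.congr_deriv ?_
      simp only [id_eq]
      field_simp
      ring
    · intro x hx
      exact div_nonneg (gphi_pos x).le (sq_nonneg x)
    · have hinv : Tendsto (fun x : ℝ => x⁻¹) atBot (𝓝 0) := by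
        have h2 : Tendsto (fun x : ℝ => (-x)⁻¹) atBot (𝓝 (0:ℝ)) :=
          tendsto_inv_atTop_zero.comp tendsto_neg_atBot_atTop
        have h3 := h2.neg
        rw [neg_zero] at h3
        refine h3.congr fun x => by rw [inv_neg, neg_neg]
      have h1 : Tendsto (fun x : ℝ => gphi x * x⁻¹) atBot (𝓝 0) := by
        simpa using gphi_tendsto_bot.mul hinv
      have := (h1.neg).sub Phi_tendsto_bot
      simpa [div_eq_mul_inv] using this
  intro x hx
  have := key x hx
  have hx0 : (0:ℝ) < -x := by simpa using hx
  rw [div_neg]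
  linarith

lemma mills_lower : ∀ x ∈ Iio (0:ℝ), (-x) * gphi x / (x ^ 2 + 1) ≤ Phi x := by
  have key : ∀ x ∈ Iio (0:ℝ), 0 ≤ Phi x + x * gphi x / (x ^ 2 + 1) := by
    refine nonneg_of_deriv_bot (f' := fun x => 2 * gphi x / (x ^ 2 + 1) ^ 2) ?_ ?_ ?_
    · intro x _
      have hden : (x : ℝ) ^ 2 + 1 ≠ 0 := by positivity
      have hnum : HasDerivAt (fun y : ℝ => y * gphi y) (1 * gphi x + x * (-x * gphi x)) x :=
        (hasDerivAt_id x).mul (gphi_deriv x)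
      have hden' : HasDerivAt (fun y : ℝ => y ^ 2 + 1) (2 * x ^ (2-1) * 1) x :=
        ((hasDerivAt_pow 2 x)).congr_deriv (by ring) |>.add_const 1
      have hdiv := (Phi_hasDeriv x).add (hnum.div hden' hden)
      refine hdiv.congr_deriv ?_
      field_simp
      ring
    · intro x _
      have := gphi_pos x
      positivity
    · have h1 : Tendsto (fun x : ℝ => x * gphi x / (x ^ 2 + 1)) atBot (𝓝 0) := by
        refine squeeze_zero_norm (fun x => ?_) gphi_tendsto_bot
        have hb : |x| * gphi x ≤ (x ^ 2 + 1) * gphi x := by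
          have : |x| ≤ x ^ 2 + 1 := by nlinarith [abs_nonneg x, sq_abs x]
          exact mul_le_mul_of_nonneg_right this (gphi_pos x).le
        rw [Real.norm_eq_abs, abs_div, abs_mul, abs_of_pos (gphi_pos x)]
        rw [abs_of_pos (by positivity : (0:ℝ) < x ^ 2 + 1)]
        rw [div_le_iff₀ (by positivity : (0:ℝ) < x ^ 2 + 1)]
        calc |x| * gphi x ≤ (x ^ 2 + 1) * gphi x := hb
          _ = gphi x * (x ^ 2 + 1) := by ring
      simpa using Phi_tendsto_bot.add h1
  intro x hx
  have := key x hx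
  have h1 : (-x) * gphi x / (x ^ 2 + 1) = -(x * gphi x / (x ^ 2 + 1)) := by ring
  rw [h1]
  linarith

lemma Phi_pos_of_neg : ∀ x ∈ Iio (0:ℝ), 0 < Phi x := by
  intro x hx
  have h := mills_lower x hx
  have hx0 : (0:ℝ) < -x := by simpa using hx
  have : 0 < (-x) * gphi x / (x ^ 2 + 1) := by
    have := gphi_pos x
    positivity
  linarith

noncomputable def rfun (x : ℝ) : ℝ := gphi x + x * Phi x

lemma rfun_deriv (x : ℝ) : HasDerivAt rfun (Phi x) x := by
  have h := (gphi_deriv x).add ((hasDerivAt_id x).mul (Phi_hasDeriv x))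
  refine h.congr_deriv ?_
  simp only [id_eq]
  ring

lemma rfun_upper : ∀ x ∈ Iio (0:ℝ), rfun x ≤ gphi x / (x ^ 2 + 1) := by
  intro x hx
  have h := mills_lower x hx
  have hx0 : x < 0 := hx
  have h2 : x * Phi x ≤ x * ((-x) * gphi x / (x ^ 2 + 1)) :=
    mul_le_mul_of_nonpos_left h hx0.le
  unfold rfun
  have h3 : gphi x + x * ((-x) * gphi x / (x ^ 2 + 1)) = gphi x / (x ^ 2 + 1) := by
    field_simp
    ring
  linarith

lemma rfun_tendsto_bot : Tendsto rfun atBot (𝓝 0) := by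
  have h1 : Tendsto (fun x : ℝ => x * Phi x) atBot (𝓝 0) := by
    refine squeeze_zero_norm' ?_ gphi_tendsto_bot
    filter_upwards [eventually_lt_atBot (0:ℝ)] with x hx
    have hP := Phi_pos_of_neg x hx
    have hU := mills_upper x hx
    rw [Real.norm_eq_abs, abs_mul, abs_of_neg hx, abs_of_pos hP]
    rw [le_div_iff₀ (by linarith : (0:ℝ) < -x)] at hU
    linarith [hU]
  have := gphi_tendsto_bot.add h1
  simp only [add_zero] at this; exact this

lemma rfun_lower : ∀ x ∈ Iio (0:ℝ), gphi x / (x ^ 2 + 3) ≤ rfun x := by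
  have key : ∀ x ∈ Iio (0:ℝ), 0 ≤ rfun x - gphi x / (x ^ 2 + 3) := by
    refine nonneg_of_deriv_bot
      (f' := fun x => Phi x + x * gphi x * (x ^ 2 + 5) / (x ^ 2 + 3) ^ 2) ?_ ?_ ?_
    · intro x _
      have hden : (x : ℝ) ^ 2 + 3 ≠ 0 := by positivity
      have hden' : HasDerivAt (fun y : ℝ => y ^ 2 + 3) (2 * x ^ (2-1) * 1) x :=
        ((hasDerivAt_pow 2 x)).congr_deriv (by ring) |>.add_const 3
      have hdiv := (rfun_deriv x).sub ((gphi_deriv x).div hden' hden)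
      refine hdiv.congr_deriv ?_
      field_simp
      ring
    · intro x hx
      have hL := mills_lower x hx
      have hg := gphi_pos x
      have hx0 : x < 0 := hx
      have hkey : (-x) * gphi x * (x ^ 2 + 5) / (x ^ 2 + 3) ^ 2
          ≤ (-x) * gphi x / (x ^ 2 + 1) := by
        rw [div_le_div_iff₀ (by positivity) (by positivity)]
        nlinarith [mul_nonneg (mul_pos (by linarith : (0:ℝ) < -x) hg).le (sq_nonneg x), mul_nonneg (mul_pos (by linarith : (0:ℝ) < -x) hg).le (sq_nonneg (x^2 - 1))]
      have h5 : x * gphi x * (x ^ 2 + 5) / (x ^ 2 + 3) ^ 2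
          = -((-x) * gphi x * (x ^ 2 + 5) / (x ^ 2 + 3) ^ 2) := by ring
      show 0 ≤ Phi x + x * gphi x * (x ^ 2 + 5) / (x ^ 2 + 3) ^ 2
      rw [h5]
      linarith
    · have h2 : Tendsto (fun x : ℝ => gphi x / (x ^ 2 + 3)) atBot (𝓝 0) := by
        refine squeeze_zero_norm (fun x => ?_) gphi_tendsto_bot
        rw [Real.norm_eq_abs, abs_div, abs_of_pos (gphi_pos x), abs_of_pos (by positivity : (0:ℝ) < x ^ 2 + 3)]
        rw [div_le_iff₀ (by positivity : (0:ℝ) < x ^ 2 + 3)]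
        nlinarith [gphi_pos x, sq_nonneg x]
      simpa using rfun_tendsto_bot.sub h2
  intro x hx
  have := key x hx
  linarith

lemma sqrt2pi_le : Real.sqrt (2 * Real.pi) ≤ 2.6 := by
  rw [show (2.6:ℝ) = Real.sqrt (2.6 ^ 2) from (Real.sqrt_sq (by norm_num)).symm]
  apply Real.sqrt_le_sqrt
  nlinarith [Real.pi_lt_d2]

lemma one_le_sqrt2pi : (1:ℝ) ≤ Real.sqrt (2 * Real.pi) := by
  rw [show (1:ℝ) = Real.sqrt 1 from Real.sqrt_one.symm]
  apply Real.sqrt_le_sqrt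
  nlinarith [Real.pi_gt_three]

lemma Phi_neg_one : (0.1 : ℝ) < Phi (-1) := by
  have h := mills_lower (-1) (by norm_num : (-1:ℝ) ∈ Iio 0)
  have hg : gphi (-1) = (Real.sqrt (2 * Real.pi))⁻¹ * Real.exp (-(1/2)) := by
    unfold gphi; norm_num
  have hE : (0:ℝ) < Real.exp (-(1/2)) := Real.exp_pos _
  have hsq : Real.exp (-(1/2)) * Real.exp (-(1/2)) = Real.exp (-1) := by
    rw [← Real.exp_add]; norm_num
  have h5 : Real.sqrt (2 * Real.pi) < 5 * Real.exp (-(1/2)) := by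
    have hlt : 2 * Real.pi < (5 * Real.exp (-(1/2))) ^ 2 := by
      have h25 : (5 * Real.exp (-(1/2))) ^ 2 = 25 * Real.exp (-1) := by
        rw [mul_pow, sq, sq, hsq]; norm_num
      rw [h25, Real.exp_neg]
      have he : Real.exp 1 < 2.7182818286 := Real.exp_one_lt_d9
      have he2 : (2.7182818286:ℝ)⁻¹ < (Real.exp 1)⁻¹ := by
        apply inv_strictAnti₀ (Real.exp_pos 1) he
      nlinarith [Real.pi_lt_d2]
    nlinarith [Real.sqrt_nonneg (2 * Real.pi), Real.sq_sqrt (by positivity : (0:ℝ) ≤ 2 * Real.pi)]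
  have hg5 : (1/5 : ℝ) < gphi (-1) := by
    rw [hg]
    rw [lt_inv_mul_iff₀ sqrt2pi_pos]
    calc Real.sqrt (2 * Real.pi) * (1/5) < 5 * Real.exp (-(1/2)) * (1/5) := by
          apply mul_lt_mul_of_pos_right h5; norm_num
      _ = Real.exp (-(1/2)) := by ring
  have harith : (-(-1):ℝ) * gphi (-1) / ((-1)^2 + 1) = gphi (-1) / 2 := by norm_num
  rw [harith] at h
  linarith

lemma key_bounds (x : ℝ) (hx : x < -1) :
    0 < Phi x ∧ 0 < -Real.log (Phi x) ∧
      (-x)/(3/2) ≤ Real.sqrt (-Real.log (Phi x)) ∧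
      Real.sqrt (-Real.log (Phi x)) ≤ (8/5) * (-x) := by
  have hx0 : x ∈ Iio (0:ℝ) := by simp only [mem_Iio]; linarith
  have ht : (1:ℝ) < -x := by linarith
  have hp : 0 < Phi x := Phi_pos_of_neg x hx0
  have hgx : gphi x = (Real.sqrt (2 * Real.pi))⁻¹ * Real.exp (-(x ^ 2) / 2) := rfl
  have hEpos : (0:ℝ) < Real.exp (-(x ^ 2) / 2) := Real.exp_pos _
  -- upper bound on p
  have hup : Phi x ≤ Real.exp (-(x ^ 2) / 2) := by
    have h1 := mills_upper x hx0
    have h2 : gphi x / (-x) ≤ Real.exp (-(x ^ 2) / 2) := by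
      rw [hgx, div_le_iff₀ (by linarith : (0:ℝ) < -x)]
      have hge : (1:ℝ) ≤ Real.sqrt (2 * Real.pi) * (-x) := by
        nlinarith [one_le_sqrt2pi]
      calc (Real.sqrt (2 * Real.pi))⁻¹ * Real.exp (-(x ^ 2) / 2)
          = Real.exp (-(x ^ 2) / 2) / Real.sqrt (2 * Real.pi) := by ring
        _ ≤ Real.exp (-(x ^ 2) / 2) * 1 / 1 := by
            rw [mul_one, div_one]
            apply div_le_of_le_mul₀ (by positivity) (by positivity)
            nlinarith [one_le_sqrt2pi]
        _ ≤ Real.exp (-(x ^ 2) / 2) * (-x) := by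
            rw [mul_one, div_one]
            nlinarith
    linarith
  have hLlow : x ^ 2 / 2 ≤ -Real.log (Phi x) := by
    have := Real.log_le_log hp hup
    rw [Real.log_exp] at this
    linarith
  have hL : 0 < -Real.log (Phi x) := by nlinarith
  -- lower bound on p
  have hlowp : Real.exp (-((5/2) * x ^ 2)) ≤ Phi x := by
    have h1 := mills_lower x hx0
    have hexp_factor : Real.exp (-(x ^ 2) / 2) = Real.exp (-((5/2) * x ^ 2)) * Real.exp (2 * x ^ 2) := by
      rw [← Real.exp_add]; ring_nf
    have hexp2 : Real.exp 2 * (2 * x ^ 2 - 1) ≤ Real.exp (2 * x ^ 2) := by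
      have h3 : Real.exp (2 * x ^ 2) = Real.exp 2 * Real.exp (2 * x ^ 2 - 2) := by
        rw [← Real.exp_add]; ring_nf
      have h4 : (2 * x ^ 2 - 2) + 1 ≤ Real.exp (2 * x ^ 2 - 2) := Real.add_one_le_exp _
      rw [h3]
      have := Real.exp_pos 2
      nlinarith
    have he2 : (7.38:ℝ) ≤ Real.exp 2 := by
      have h5 : Real.exp 2 = Real.exp 1 * Real.exp 1 := by rw [← Real.exp_add]; norm_num
      nlinarith [Real.exp_one_gt_d9]
    have hkey : Real.sqrt (2 * Real.pi) * (x ^ 2 + 1) ≤ (-x) * Real.exp (2 * x ^ 2) := by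
      have h6 : (2.6:ℝ) * (x ^ 2 + 1) ≤ (-x) * (Real.exp 2 * (2 * x ^ 2 - 1)) := by
        have hs : (0:ℝ) ≤ -x - 1 := by linarith
        have h2x : (0:ℝ) ≤ 2 * x ^ 2 - 1 := by nlinarith
        have he2' : (-x) * (7.38 * (2 * x ^ 2 - 1)) ≤ (-x) * (Real.exp 2 * (2 * x ^ 2 - 1)) := by
          apply mul_le_mul_of_nonneg_left (mul_le_mul_of_nonneg_right he2 h2x) (by linarith)
        nlinarith [mul_nonneg hs hs, mul_nonneg (mul_nonneg hs hs) hs]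
      have h7 : (-x) * (Real.exp 2 * (2 * x ^ 2 - 1)) ≤ (-x) * Real.exp (2 * x ^ 2) := by
        apply mul_le_mul_of_nonneg_left hexp2 (by linarith)
      nlinarith [sqrt2pi_le, sq_nonneg x]
    have h2 : Real.exp (-((5/2) * x ^ 2)) ≤ (-x) * gphi x / (x ^ 2 + 1) := by
      rw [hgx, le_div_iff₀ (by positivity : (0:ℝ) < x ^ 2 + 1)]
      have hgoal : Real.exp (-((5/2) * x ^ 2)) * (x ^ 2 + 1) * Real.sqrt (2 * Real.pi)
          ≤ -x * Real.exp (-(x ^ 2) / 2) := by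
        rw [hexp_factor]
        have := mul_le_mul_of_nonneg_left hkey (Real.exp_pos (-((5/2) * x ^ 2))).le
        nlinarith []
      have hrw : -x * ((Real.sqrt (2 * Real.pi))⁻¹ * Real.exp (-(x ^ 2) / 2))
          = (-x * Real.exp (-(x ^ 2) / 2)) / Real.sqrt (2 * Real.pi) := by
        field_simp
      rw [hrw, le_div_iff₀ sqrt2pi_pos]
      linarith
    linarith
  have hLup : -Real.log (Phi x) ≤ (5/2) * x ^ 2 := by
    have := Real.log_le_log (Real.exp_pos _) hlowp
    rw [Real.log_exp] at this
    linarith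
  refine ⟨hp, hL, ?_, ?_⟩
  · have heq : (-x)/(3/2) = Real.sqrt (((-x)/(3/2)) ^ 2) := (Real.sqrt_sq (by linarith)).symm
    rw [heq]
    exact Real.sqrt_le_sqrt (by nlinarith)
  · have h2 : Real.sqrt (-Real.log (Phi x)) ≤ Real.sqrt (((8/5) * (-x)) ^ 2) :=
      Real.sqrt_le_sqrt (by nlinarith)
    rwa [Real.sqrt_sq (by linarith : (0:ℝ) ≤ (8/5) * (-x))] at h2

lemma F_deriv (x : ℝ) (hx : x ∈ Iio (0:ℝ)) :
    HasDerivAt (fun y => gphi y / Phi y) (-(gphi x * rfun x) / Phi x ^ 2) x := by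
  have hp := Phi_pos_of_neg x hx
  have h := (gphi_deriv x).div (Phi_hasDeriv x) hp.ne'
  refine h.congr_deriv ?_
  unfold rfun
  ring

lemma rfun_pos (x : ℝ) (hx : x ∈ Iio (0:ℝ)) : 0 < rfun x := by
  have h := rfun_lower x hx
  have hg := gphi_pos x
  have : (0:ℝ) < gphi x / (x ^ 2 + 3) := by positivity
  linarith

lemma F_strictAnti : StrictAntiOn (fun y => gphi y / Phi y) (Iio (0:ℝ)) := by
  refine strictAntiOn_of_deriv_neg (convex_Iio 0) ?_ ?_
  · exact fun x hx => (F_deriv x hx).continuousAt.continuousWithinAt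
  · rw [interior_Iio]
    intro x hx
    rw [(F_deriv x hx).deriv]
    have hp := Phi_pos_of_neg x hx
    have hr := rfun_pos x hx
    have hg := gphi_pos x
    apply div_neg_of_neg_of_pos (by nlinarith) (by positivity)

lemma sqrtL_deriv (x : ℝ) (hx : x < -1) :
    HasDerivAt (fun y => Real.sqrt (-Real.log (Phi y)))
      (-(gphi x / Phi x) / (2 * Real.sqrt (-Real.log (Phi x)))) x := by
  obtain ⟨hp, hL, -, -⟩ := key_bounds x hx
  have hlog : HasDerivAt (fun y => -Real.log (Phi y)) (-(gphi x / Phi x)) x :=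
    ((Phi_hasDeriv x).log hp.ne').neg
  exact hlog.sqrt hL.ne'

noncomputable def Gfun (x : ℝ) : ℝ :=
  gphi x / Phi x - (1/4) * Real.sqrt (-Real.log (Phi x))

noncomputable def Kfun (x : ℝ) : ℝ :=
  4 * Real.sqrt (-Real.log (Phi x)) - gphi x / Phi x

lemma G_hasDeriv (x : ℝ) (hx : x < -1) :
    HasDerivAt Gfun (-(gphi x * rfun x) / Phi x ^ 2
      + (1/4) * (gphi x / Phi x) / (2 * Real.sqrt (-Real.log (Phi x)))) x := by
  have hx0 : x ∈ Iio (0:ℝ) := by simp only [mem_Iio]; linarith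
  have h := (F_deriv x hx0).sub ((sqrtL_deriv x hx).const_mul (1/4 : ℝ))
  refine h.congr_deriv ?_
  ring

lemma K_hasDeriv (x : ℝ) (hx : x < -1) :
    HasDerivAt Kfun (-(4 * (gphi x / Phi x) / (2 * Real.sqrt (-Real.log (Phi x))))
      - -(gphi x * rfun x) / Phi x ^ 2) x := by
  have hx0 : x ∈ Iio (0:ℝ) := by simp only [mem_Iio]; linarith
  have h := ((sqrtL_deriv x hx).const_mul (4 : ℝ)).sub (F_deriv x hx0)
  refine h.congr_deriv ?_
  ring

lemma G_deriv_nonpos (x : ℝ) (hx : x < -1) :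
    -(gphi x * rfun x) / Phi x ^ 2
      + (1/4) * (gphi x / Phi x) / (2 * Real.sqrt (-Real.log (Phi x))) ≤ 0 := by
  obtain ⟨hp, hL, hs1, hs2⟩ := key_bounds x hx
  set s := Real.sqrt (-Real.log (Phi x)) with hs_def
  have hspos : 0 < s := Real.sqrt_pos.2 hL
  have hx0 : x ∈ Iio (0:ℝ) := by simp only [mem_Iio]; linarith
  have hg := gphi_pos x
  have ht : (1:ℝ) < -x := by linarith
  have hmu := mills_upper x hx0
  have hr2 := rfun_lower x hx0
  have hrpos := rfun_pos x hx0
  -- gphi x ≥ Phi x * (-x)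
  have hg1 : Phi x * (-x) ≤ gphi x := by
    rw [le_div_iff₀ (by linarith : (0:ℝ) < -x)] at hmu
    linarith
  -- rfun x * (x^2+3) ≥ gphi x
  have hg2 : gphi x ≤ rfun x * (x ^ 2 + 3) := by
    rw [div_le_iff₀ (by positivity : (0:ℝ) < x ^ 2 + 3)] at hr2
    linarith
  -- 8 * s * (-x) ≥ x^2 + 3
  have h8 : x ^ 2 + 3 ≤ 8 * s * (-x) := by
    have := mul_le_mul_of_nonneg_left hs1 (by linarith : (0:ℝ) ≤ 8 * (-x))
    nlinarith
  -- Phi x ≤ 8 * rfun x * s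
  have hps : Phi x ≤ 8 * rfun x * s := by
    have h1 : Phi x * (-x) ≤ rfun x * (x ^ 2 + 3) := le_trans hg1 hg2
    have h2 : rfun x * (x ^ 2 + 3) ≤ rfun x * (8 * s * (-x)) :=
      mul_le_mul_of_nonneg_left h8 hrpos.le
    have h3 : Phi x * (-x) ≤ 8 * rfun x * s * (-x) := by nlinarith
    have hxpos : (0:ℝ) < -x := by linarith
    nlinarith
  have hkey : (1/4) * (gphi x / Phi x) / (2 * s) ≤ (gphi x * rfun x) / Phi x ^ 2 := by
    rw [div_le_div_iff₀ (by positivity) (by positivity)]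
    have hAp : gphi x / Phi x * Phi x ^ 2 = gphi x * Phi x := by field_simp
    calc 1/4 * (gphi x / Phi x) * Phi x ^ 2 = 1/4 * (gphi x * Phi x) := by
          rw [mul_assoc, hAp]
      _ ≤ gphi x * rfun x * (2 * s) := by
          nlinarith [mul_le_mul_of_nonneg_left hps hg.le]
  linarith [hkey, neg_div (Phi x ^ 2) (gphi x * rfun x)]

lemma K_deriv_nonpos (x : ℝ) (hx : x < -1) :
    -(4 * (gphi x / Phi x) / (2 * Real.sqrt (-Real.log (Phi x))))
      - -(gphi x * rfun x) / Phi x ^ 2 ≤ 0 := by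
  obtain ⟨hp, hL, hs1, hs2⟩ := key_bounds x hx
  set s := Real.sqrt (-Real.log (Phi x)) with hs_def
  have hspos : 0 < s := Real.sqrt_pos.2 hL
  have hx0 : x ∈ Iio (0:ℝ) := by simp only [mem_Iio]; linarith
  have hg := gphi_pos x
  have ht : (1:ℝ) < -x := by linarith
  have hml := mills_lower x hx0
  have hr1 := rfun_upper x hx0
  have hrpos := rfun_pos x hx0
  -- gphi x * (-x) ≤ Phi x * (x^2+1)
  have hg1 : gphi x * (-x) ≤ Phi x * (x ^ 2 + 1) := by
    rw [div_le_iff₀ (by positivity : (0:ℝ) < x ^ 2 + 1)] at hml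
    nlinarith
  -- rfun x * (x^2+1) ≤ gphi x
  have hg2 : rfun x * (x ^ 2 + 1) ≤ gphi x := by
    rw [le_div_iff₀ (by positivity : (0:ℝ) < x ^ 2 + 1)] at hr1
    linarith
  -- rfun x * (-x) ≤ Phi x
  have hrx : rfun x * (-x) ≤ Phi x := by
    have h1 : rfun x * (x ^ 2 + 1) * (-x) ≤ gphi x * (-x) :=
      mul_le_mul_of_nonneg_right hg2 (by linarith)
    have h2 : rfun x * (x ^ 2 + 1) * (-x) ≤ Phi x * (x ^ 2 + 1) := le_trans h1 hg1
    have hden : (0:ℝ) < x ^ 2 + 1 := by positivity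
    nlinarith
  -- rfun x * s ≤ 2 * Phi x
  have hrs : rfun x * s ≤ 2 * Phi x := by
    have h1 : rfun x * s ≤ rfun x * ((8/5) * (-x)) :=
      mul_le_mul_of_nonneg_left hs2 hrpos.le
    nlinarith
  have hkey : (gphi x * rfun x) / Phi x ^ 2 ≤ 4 * (gphi x / Phi x) / (2 * s) := by
    rw [div_le_div_iff₀ (by positivity) (by positivity)]
    have hAp : gphi x / Phi x * Phi x ^ 2 = gphi x * Phi x := by field_simp
    calc gphi x * rfun x * (2 * s) = gphi x * (rfun x * s) * 2 := by ring
      _ ≤ gphi x * (2 * Phi x) * 2 := by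
          nlinarith [mul_le_mul_of_nonneg_left hrs hg.le]
      _ = 4 * (gphi x * Phi x) := by ring
      _ = 4 * (gphi x / Phi x) * Phi x ^ 2 := by rw [mul_assoc, hAp]
  linarith [hkey, neg_div (Phi x ^ 2) (gphi x * rfun x)]

lemma G_anti : AntitoneOn Gfun (Iio (-1:ℝ)) := by
  refine antitoneOn_of_deriv_nonpos (convex_Iio _) ?_ ?_ ?_
  · exact fun x hx => (G_hasDeriv x hx).continuousAt.continuousWithinAt
  · rw [interior_Iio]
    exact fun x hx => (G_hasDeriv x hx).differentiableAt.differentiableWithinAt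
  · rw [interior_Iio]
    intro x hx
    rw [(G_hasDeriv x hx).deriv]
    exact G_deriv_nonpos x hx

lemma K_anti : AntitoneOn Kfun (Iio (-1:ℝ)) := by
  refine antitoneOn_of_deriv_nonpos (convex_Iio _) ?_ ?_ ?_
  · exact fun x hx => (K_hasDeriv x hx).continuousAt.continuousWithinAt
  · rw [interior_Iio]
    exact fun x hx => (K_hasDeriv x hx).differentiableAt.differentiableWithinAt
  · rw [interior_Iio]
    intro x hx
    rw [(K_hasDeriv x hx).deriv]
    exact K_deriv_nonpos x hx

lemma Phi_continuous : Continuous Phi :=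
  continuous_iff_continuousAt.2 fun x => (Phi_hasDeriv x).continuousAt

lemma Phi_surj_small (p : ℝ) (hp0 : 0 < p) (hp1 : p < 0.1) : ∃ x, Phi x = p ∧ x < -1 := by
  have hev : ∀ᶠ x in atBot, Phi x < p := Phi_tendsto_bot.eventually_lt_const hp0
  obtain ⟨a, ha⟩ := hev.exists
  have ha1 : a < -1 := by
    by_contra hcon
    push_neg at hcon
    have := Phi_strictMono.le_iff_le.2 hcon
    have h2 := Phi_neg_one
    linarith
  have hsub := intermediate_value_Icc ha1.le Phi_continuous.continuousOn
  have hmem : p ∈ Icc (Phi a) (Phi (-1)) := ⟨ha.le, by linarith [Phi_neg_one]⟩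
  obtain ⟨x, hx_mem, hx_eq⟩ := hsub hmem
  refine ⟨x, hx_eq, ?_⟩
  rcases lt_or_eq_of_le hx_mem.2 with h | h
  · exact h
  · exfalso
    rw [h] at hx_eq
    have := Phi_neg_one
    linarith [hx_eq]

lemma PhiInv_spec (p : ℝ) (hp0 : 0 < p) (hp1 : p < 0.1) :
    Phi (PhiInv p) = p ∧ PhiInv p < -1 := by
  obtain ⟨x, hx, _⟩ := Phi_surj_small p hp0 hp1
  have heq : Phi (PhiInv p) = p := Function.invFun_eq ⟨x, hx⟩
  refine ⟨heq, ?_⟩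
  have h2 := Phi_neg_one
  by_contra hcon
  push_neg at hcon
  have := Phi_strictMono.le_iff_le.2 hcon
  linarith

theorem stmt16 :
    StrictAntiOn psiFun (Set.Ioo (0 : ℝ) 0.1) ∧
      ∃ c C : ℝ, 0 < c ∧ 0 < C ∧
        ∀ p₁ p₂ : ℝ, 0 < p₁ → p₁ < p₂ → p₂ < 0.1 →
          c * (Real.sqrt (Real.log (1 / p₁)) - Real.sqrt (Real.log (1 / p₂)))
              ≤ psiFun p₁ - psiFun p₂ ∧
            psiFun p₁ - psiFun p₂
              ≤ C * (Real.sqrt (Real.log (1 / p₁)) - Real.sqrt (Real.log (1 / p₂))) := by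
  constructor
  · intro p₁ hp₁ p₂ hp₂ hlt
    obtain ⟨h1eq, h1lt⟩ := PhiInv_spec p₁ hp₁.1 hp₁.2
    obtain ⟨h2eq, h2lt⟩ := PhiInv_spec p₂ hp₂.1 hp₂.2
    have hxlt : PhiInv p₁ < PhiInv p₂ := by
      apply Phi_strictMono.lt_iff_lt.1
      rw [h1eq, h2eq]; exact hlt
    have hF := F_strictAnti (show PhiInv p₁ ∈ Iio (0:ℝ) by simp only [mem_Iio]; linarith)
      (show PhiInv p₂ ∈ Iio (0:ℝ) by simp only [mem_Iio]; linarith) hxlt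
    simp only at hF
    rw [h1eq, h2eq] at hF
    exact hF
  · refine ⟨1/4, 4, by norm_num, by norm_num, ?_⟩
    intro p₁ p₂ hp₁ hlt hp₂
    obtain ⟨h1eq, h1lt⟩ := PhiInv_spec p₁ hp₁ (lt_trans hlt hp₂)
    obtain ⟨h2eq, h2lt⟩ := PhiInv_spec p₂ (lt_trans hp₁ hlt) hp₂
    have hxlt : PhiInv p₁ < PhiInv p₂ := by
      apply Phi_strictMono.lt_iff_lt.1
      rw [h1eq, h2eq]; exact hlt
    have hmem1 : PhiInv p₁ ∈ Iio (-1:ℝ) := h1lt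
    have hmem2 : PhiInv p₂ ∈ Iio (-1:ℝ) := h2lt
    have hG := G_anti hmem1 hmem2 hxlt.le
    have hK := K_anti hmem1 hmem2 hxlt.le
    unfold Gfun at hG
    unfold Kfun at hK
    rw [h1eq, h2eq] at hG hK
    have hlog1 : Real.log (1 / p₁) = -Real.log p₁ := by rw [one_div, Real.log_inv]
    have hlog2 : Real.log (1 / p₂) = -Real.log p₂ := by rw [one_div, Real.log_inv]
    have hpsi1 : psiFun p₁ = gphi (PhiInv p₁) / p₁ := rfl
    have hpsi2 : psiFun p₂ = gphi (PhiInv p₂) / p₂ := rfl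
    rw [hlog1, hlog2, hpsi1, hpsi2]
    constructor
    · linarith
    · linarith
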